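/- Let K > 0, let S, Z, δ_Z ∈ ℝ^{N×M} with N ≤ M, ‖S‖_op ≤ K and M/N ≤ K, let λ > 0, and define Y = √λ S + Z and Ỹ = √λ S + (Z + δ_Z). Let L(z) = (1/N) Tr (z² I_N − Y Yᵀ)⁻¹ Y Sᵀ and L̃(z) = (1/N) Tr (z² I_N − Ỹ Ỹᵀ)⁻¹ Ỹ Sᵀ. Then there is a constant C' depending only on K such that for every z ∈ ℂ∖ℝ: |L(z) − L̃(z)| ≤ C' · (1/√N) · (Im z)⁻² · ‖δ_Z‖_F. -/

import Mathlib

open MeasureTheory Matrix Filter Topology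

noncomputable section

/-- Complexification of a real matrix. -/
def mc {N M : ℕ} (A : Matrix (Fin N) (Fin M) ℝ) : Matrix (Fin N) (Fin M) ℂ :=
  A.map (fun x => (x : ℂ))

/-- `L(z) = (1/N) Tr (z² I_N − Y Yᵀ)⁻¹ Y Sᵀ`. -/
def resL {N M : ℕ} (Y S : Matrix (Fin N) (Fin M) ℝ) (z : ℂ) : ℂ :=
  ((z ^ 2 • (1 : Matrix (Fin N) (Fin N) ℂ) - mc Y * (mc Y)ᵀ)⁻¹ * mc Y * (mc S)ᵀ).trace / N

/-- Frobenius norm of a matrix. -/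
def frobNorm {N M : ℕ} (A : Matrix (Fin N) (Fin M) ℝ) : ℝ :=
  Real.sqrt (∑ i, ∑ j, (A i j) ^ 2)

/-- `‖A‖_op ≤ K`, expressed via Euclidean norms of vectors. -/
def OpNormLE {N M : ℕ} (A : Matrix (Fin N) (Fin M) ℝ) (K : ℝ) : Prop :=
  ∀ x : Fin M → ℝ,
    Real.sqrt (∑ i, (A.mulVec x i) ^ 2) ≤ K * Real.sqrt (∑ j, (x j) ^ 2)

/-!
Write `G(W) = (z² I − W Wᴴ)⁻¹`. For `Ỹ = Y + Δ` the second resolvent identity, combined with the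
push-through identity `Ỹᴴ G(Ỹ) Ỹ = z² (z² I − Ỹᴴ Ỹ)⁻¹ − I`, gives
`G(Y) Y − G(Ỹ) Ỹ = −z² G(Y) Δ (z² I − Ỹᴴ Ỹ)⁻¹ − G(Y) Y Δᴴ G(Ỹ) Ỹ`,
so `N (L − L̃)` is a sum of two traces `tr (Δ Q)` and `tr (Δᴴ Q')` with `‖Q‖, ‖Q'‖ ≤ K |Im z|⁻²`,
and `|tr (Δ Q)| ≤ √(rows Δ) ‖Q‖ ‖Δ‖_F`. The operator bounds `‖z G(W)‖, ‖G(W) W‖ ≤ |Im z|⁻¹` come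
from the quadratic form `⟪x, (z² I − W Wᴴ) x⟫ = z² ‖x‖² − ‖Wᴴ x‖²` and the factorisation
`z² s² − t² = (z s − t) (z s + t)`, in which both factors have imaginary part `s Im z`.
-/

open scoped Matrix.Norms.L2Operator InnerProductSpace

lemma Complex.abs_im_mul_mul_max_le_norm_sq_sub_sq (z : ℂ) {s t : ℝ} (hs : 0 ≤ s) (ht : 0 ≤ t) :
    |z.im| * s * max (‖z‖ * s) t ≤ ‖z ^ 2 * (s : ℂ) ^ 2 - (t : ℂ) ^ 2‖ := by
  set a := ‖z * s - t‖
  set b := ‖z * s + t‖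
  have ha : |z.im| * s ≤ a := by
    simpa [abs_mul, abs_of_nonneg hs] using Complex.abs_im_le_norm (z * s - t)
  have hb : |z.im| * s ≤ b := by
    simpa [abs_mul, abs_of_nonneg hs] using Complex.abs_im_le_norm (z * s + t)
  have hzs : 2 * (‖z‖ * s) ≤ a + b := by
    have := norm_add_le (z * s - t) (z * s + t)
    rw [show z * s - t + (z * s + t) = 2 * (z * s) by ring, norm_mul, norm_mul,
      Complex.norm_real, Real.norm_of_nonneg hs] at this
    simpa using this
  have ht' : 2 * t ≤ a + b := by
    have := norm_sub_le (z * s + t) (z * s - t)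
    rw [show z * s + t - (z * s - t) = 2 * (t : ℂ) by ring, norm_mul,
      Complex.norm_real, Real.norm_of_nonneg ht] at this
    norm_num at this
    linarith
  have hab : ‖z ^ 2 * (s : ℂ) ^ 2 - (t : ℂ) ^ 2‖ = a * b := by
    rw [← norm_mul]; congr 1; ring
  have hm : 0 ≤ |z.im| * s := by positivity
  rw [hab]
  rcases le_total (‖z‖ * s) t with h | h
  · rw [max_eq_right h]; nlinarith [mul_le_mul ha hb hm (by positivity : (0:ℝ) ≤ a)]
  · rw [max_eq_left h]; nlinarith [mul_le_mul ha hb hm (by positivity : (0:ℝ) ≤ a)]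

namespace Matrix

lemma toEuclideanLin_mul_apply {l m n : Type*} [Fintype m] [DecidableEq m] [Fintype n]
    [DecidableEq n] (A : Matrix l m ℂ) (B : Matrix m n ℂ) (x : EuclideanSpace ℂ n) :
    (A * B).toEuclideanLin x = A.toEuclideanLin (B.toEuclideanLin x) := by
  rw [toLpLin_mul_same, LinearMap.comp_apply]

lemma l2_opNorm_mul_mul_le {l m n o : Type*} [Fintype l] [Fintype m] [DecidableEq m]
    [Fintype n] [DecidableEq n] [Fintype o] [DecidableEq o] (A : Matrix l m ℂ) (B : Matrix m n ℂ)
    (C : Matrix n o ℂ) : ‖A * B * C‖ ≤ ‖A‖ * ‖B‖ * ‖C‖ :=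
  (l2_opNorm_mul _ _).trans (mul_le_mul_of_nonneg_right (l2_opNorm_mul _ _) (norm_nonneg _))

lemma sum_sum_norm_conjTranspose_sq {n m : Type*} [Fintype n] [Fintype m] (Δ : Matrix n m ℂ) :
    ∑ i, ∑ j, ‖Δᴴ i j‖ ^ 2 = ∑ i, ∑ j, ‖Δ i j‖ ^ 2 := by
  rw [Finset.sum_comm]; simp

variable {n m : Type*} [Fintype n] [DecidableEq n] [Fintype m]

lemma sqrt_sum_norm_sq_col_le_l2_opNorm (Q : Matrix m n ℂ) (i : n) :
    √(∑ j, ‖Q j i‖ ^ 2) ≤ ‖Q‖ := by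
  have := Q.l2_opNorm_mulVec (EuclideanSpace.single i 1)
  simpa [EuclideanSpace.norm_eq] using this

lemma norm_trace_mul_le (Δ : Matrix n m ℂ) (Q : Matrix m n ℂ) :
    ‖(Δ * Q).trace‖ ≤ √(Fintype.card n) * ‖Q‖ * √(∑ i, ∑ j, ‖Δ i j‖ ^ 2) := by
  set r : n → ℝ := fun i => √(∑ j, ‖Δ i j‖ ^ 2)
  have hr : ∀ i, r i ^ 2 = ∑ j, ‖Δ i j‖ ^ 2 := fun i =>
    Real.sq_sqrt (Finset.sum_nonneg fun j _ => sq_nonneg _)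
  calc ‖(Δ * Q).trace‖ = ‖∑ i, ∑ j, Δ i j * Q j i‖ := by simp [trace, mul_apply]
    _ ≤ ∑ i, ∑ j, ‖Δ i j‖ * ‖Q j i‖ := by
        refine (norm_sum_le _ _).trans (Finset.sum_le_sum fun i _ => ?_)
        exact (norm_sum_le _ _).trans_eq (by simp only [norm_mul])
    _ ≤ ∑ i, r i * √(∑ j, ‖Q j i‖ ^ 2) :=
        Finset.sum_le_sum fun i _ => Real.sum_mul_le_sqrt_mul_sqrt _ _ _
    _ ≤ ∑ i, 1 * r i * ‖Q‖ := by
        simp only [one_mul]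
        gcongr with i
        exact sqrt_sum_norm_sq_col_le_l2_opNorm Q i
    _ ≤ √(∑ _i : n, 1 ^ 2) * √(∑ i, r i ^ 2) * ‖Q‖ := by
        rw [← Finset.sum_mul]
        gcongr
        exact Real.sum_mul_le_sqrt_mul_sqrt _ _ _
    _ = _ := by simp only [hr, one_pow, Finset.sum_const, Finset.card_univ, nsmul_eq_mul,
          mul_one]; ring

variable [DecidableEq m]

lemma inner_toEuclideanLin_sq_smul_one_sub_mul_conjTranspose (W : Matrix n m ℂ) (z : ℂ)
    (x : EuclideanSpace ℂ n) :
    ⟪x, (z ^ 2 • 1 - W * Wᴴ).toEuclideanLin x⟫_ℂ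
      = z ^ 2 * (‖x‖ : ℂ) ^ 2 - (‖Wᴴ.toEuclideanLin x‖ : ℂ) ^ 2 := by
  have hadj : ⟪x, W.toEuclideanLin (Wᴴ.toEuclideanLin x)⟫_ℂ
      = ⟪Wᴴ.toEuclideanLin x, Wᴴ.toEuclideanLin x⟫_ℂ := by
    rw [toEuclideanLin_conjTranspose_eq_adjoint, LinearMap.adjoint_inner_left]
  rw [map_sub, map_smul, LinearMap.sub_apply, LinearMap.smul_apply, toEuclideanLin_mul_apply,
    toLpLin_one, LinearMap.id_apply, inner_sub_right, inner_smul_right, hadj,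
    inner_self_eq_norm_sq_to_K, inner_self_eq_norm_sq_to_K]
  rfl

lemma abs_im_mul_mul_max_le_norm_inner (W : Matrix n m ℂ) (z : ℂ) (x : EuclideanSpace ℂ n) :
    |z.im| * ‖x‖ * max (‖z‖ * ‖x‖) ‖Wᴴ.toEuclideanLin x‖
      ≤ ‖⟪x, (z ^ 2 • 1 - W * Wᴴ).toEuclideanLin x⟫_ℂ‖ := by
  rw [inner_toEuclideanLin_sq_smul_one_sub_mul_conjTranspose]
  exact z.abs_im_mul_mul_max_le_norm_sq_sub_sq (norm_nonneg _) (norm_nonneg _)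

variable {z : ℂ}

lemma isUnit_det_sq_smul_one_sub_mul_conjTranspose (W : Matrix n m ℂ) (hz : z.im ≠ 0) :
    IsUnit (z ^ 2 • 1 - W * Wᴴ).det := by
  rw [isUnit_iff_ne_zero]
  intro hdet
  obtain ⟨v, hv, hAv⟩ := exists_mulVec_eq_zero_iff.2 hdet
  have hAv' : (z ^ 2 • 1 - W * Wᴴ).toEuclideanLin (WithLp.toLp 2 v) = 0 := by
    rw [toLpLin_apply, WithLp.ofLp_toLp, hAv, WithLp.toLp_zero]
  have key := abs_im_mul_mul_max_le_norm_inner W z (WithLp.toLp 2 v)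
  rw [hAv', inner_zero_right, norm_zero] at key
  have hx : 0 < ‖WithLp.toLp 2 v‖ := norm_pos_iff.2 (by simpa using hv)
  have him : 0 < |z.im| := abs_pos.2 hz
  have hnz : |z.im| ≤ ‖z‖ := Complex.abs_im_le_norm z
  have := (mul_le_mul_of_nonneg_left (le_max_left _ _) (by positivity)).trans key
  nlinarith [mul_pos (mul_pos him hx) (mul_pos (him.trans_le hnz) hx)]

def gramResolvent (W : Matrix n m ℂ) (z : ℂ) : Matrix n n ℂ := (z ^ 2 • 1 - W * Wᴴ)⁻¹

lemma sq_smul_one_sub_mul_gramResolvent (W : Matrix n m ℂ) (hz : z.im ≠ 0) :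
    (z ^ 2 • 1 - W * Wᴴ) * gramResolvent W z = 1 :=
  mul_nonsing_inv _ (isUnit_det_sq_smul_one_sub_mul_conjTranspose W hz)

lemma gramResolvent_mul_sq_smul_one_sub (W : Matrix n m ℂ) (hz : z.im ≠ 0) :
    gramResolvent W z * (z ^ 2 • 1 - W * Wᴴ) = 1 :=
  nonsing_inv_mul _ (isUnit_det_sq_smul_one_sub_mul_conjTranspose W hz)

lemma norm_smul_gramResolvent_le (W : Matrix n m ℂ) (hz : z.im ≠ 0) :
    ‖z • gramResolvent W z‖ ≤ |z.im|⁻¹ := by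
  have him : 0 < |z.im| := abs_pos.2 hz
  refine ContinuousLinearMap.opNorm_le_bound _ (inv_nonneg.2 him.le) fun u => ?_
  set x := (gramResolvent W z).toEuclideanLin u
  have hx : (z ^ 2 • 1 - W * Wᴴ).toEuclideanLin x = u := by
    rw [← toEuclideanLin_mul_apply, sq_smul_one_sub_mul_gramResolvent W hz, toLpLin_one]; rfl
  have key := abs_im_mul_mul_max_le_norm_inner W z x
  rw [hx] at key
  have key' : ‖x‖ * (|z.im| * (‖z‖ * ‖x‖)) ≤ ‖x‖ * ‖u‖ := by
    have := (mul_le_mul_of_nonneg_left (le_max_left _ _) (by positivity)).trans key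
    linarith [norm_inner_le_norm (𝕜 := ℂ) x u]
  change ‖(z • gramResolvent W z).toEuclideanLin u‖ ≤ _
  rw [map_smul, LinearMap.smul_apply, norm_smul, le_inv_mul_iff₀ him]
  change |z.im| * (‖z‖ * ‖x‖) ≤ ‖u‖
  rcases (norm_nonneg x).eq_or_lt with hx0 | hxpos
  · simp [← hx0]
  · exact le_of_mul_le_mul_left key' hxpos

lemma norm_gramResolvent_mul_le (W : Matrix n m ℂ) (hz : z.im ≠ 0) :
    ‖gramResolvent W z * W‖ ≤ |z.im|⁻¹ := by
  have him : 0 < |z.im| := abs_pos.2 hz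
  refine ContinuousLinearMap.opNorm_le_bound _ (inv_nonneg.2 him.le) fun u => ?_
  set x := (gramResolvent W z * W).toEuclideanLin u
  have hx : (z ^ 2 • 1 - W * Wᴴ).toEuclideanLin x = W.toEuclideanLin u := by
    rw [← toEuclideanLin_mul_apply, ← Matrix.mul_assoc, sq_smul_one_sub_mul_gramResolvent W hz,
      Matrix.one_mul]
  have key := abs_im_mul_mul_max_le_norm_inner W z x
  rw [hx, ← LinearMap.adjoint_inner_left, ← toEuclideanLin_conjTranspose_eq_adjoint] at key
  have key' := key.trans (norm_inner_le_norm (𝕜 := ℂ) _ u)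
  change ‖x‖ ≤ _
  rw [le_inv_mul_iff₀ him]
  have hnz : |z.im| ≤ ‖z‖ := Complex.abs_im_le_norm z
  have h1 := (mul_le_mul_of_nonneg_left (le_max_left _ _) (by positivity)).trans key'
  have h2 := (mul_le_mul_of_nonneg_left (le_max_right _ _) (by positivity)).trans key'
  rcases (norm_nonneg (Wᴴ.toEuclideanLin x)).eq_or_lt with hb0 | hbpos
  · rw [← hb0, zero_mul] at h1
    have hx0 : ‖x‖ = 0 := by
      by_contra hx0
      have hxpos := (norm_nonneg x).lt_of_ne' hx0
      nlinarith [mul_pos (mul_pos him hxpos) (mul_pos (him.trans_le hnz) hxpos)]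
    simp [hx0]
  · exact le_of_mul_le_mul_left (by linarith) hbpos

lemma conjTranspose_mul_gramResolvent (W : Matrix n m ℂ) (hz : z.im ≠ 0) :
    Wᴴ * gramResolvent W z = gramResolvent Wᴴ z * Wᴴ := by
  have hcomm : (z ^ 2 • 1 - Wᴴ * Wᴴᴴ) * Wᴴ = Wᴴ * (z ^ 2 • 1 - W * Wᴴ) := by
    simp only [conjTranspose_conjTranspose, Matrix.sub_mul, Matrix.mul_sub, Matrix.smul_mul,
      Matrix.mul_smul, Matrix.one_mul, Matrix.mul_one, Matrix.mul_assoc]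
  calc Wᴴ * gramResolvent W z
      = gramResolvent Wᴴ z * (z ^ 2 • 1 - Wᴴ * Wᴴᴴ) * Wᴴ * gramResolvent W z := by
        rw [gramResolvent_mul_sq_smul_one_sub _ hz, Matrix.one_mul]
    _ = gramResolvent Wᴴ z * Wᴴ * ((z ^ 2 • 1 - W * Wᴴ) * gramResolvent W z) := by
        rw [Matrix.mul_assoc (gramResolvent Wᴴ z), hcomm]; simp only [Matrix.mul_assoc]
    _ = gramResolvent Wᴴ z * Wᴴ := by
        rw [sq_smul_one_sub_mul_gramResolvent _ hz, Matrix.mul_one]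

lemma conjTranspose_mul_gramResolvent_mul (W : Matrix n m ℂ) (hz : z.im ≠ 0) :
    Wᴴ * (gramResolvent W z * W) = z ^ 2 • gramResolvent Wᴴ z - 1 := by
  have h := gramResolvent_mul_sq_smul_one_sub Wᴴ hz
  rw [conjTranspose_conjTranspose, Matrix.mul_sub, Matrix.mul_smul, Matrix.mul_one] at h
  rw [← Matrix.mul_assoc, conjTranspose_mul_gramResolvent W hz, Matrix.mul_assoc, ← h]
  abel

lemma gramResolvent_mul_sub_gramResolvent_add_mul (Y Δ : Matrix n m ℂ) (hz : z.im ≠ 0) :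
    gramResolvent Y z * Y - gramResolvent (Y + Δ) z * (Y + Δ)
      = -(z ^ 2 • (gramResolvent Y z * Δ * gramResolvent (Y + Δ)ᴴ z))
        - gramResolvent Y z * Y * Δᴴ * (gramResolvent (Y + Δ) z * (Y + Δ)) := by
  set R := gramResolvent Y z
  set G := gramResolvent (Y + Δ) z * (Y + Δ)
  have hshift : z ^ 2 • 1 - Y * Yᴴ
      = (z ^ 2 • 1 - (Y + Δ) * (Y + Δ)ᴴ) + (Δ * (Y + Δ)ᴴ + Y * Δᴴ) := by
    simp only [conjTranspose_add, Matrix.add_mul, Matrix.mul_add]; abel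
  have hG : (z ^ 2 • 1 - Y * Yᴴ) * G = Y + Δ + Δ * ((Y + Δ)ᴴ * G) + Y * (Δᴴ * G) := by
    rw [hshift, Matrix.add_mul (z ^ 2 • 1 - (Y + Δ) * (Y + Δ)ᴴ), Matrix.add_mul (Δ * _),
      ← Matrix.mul_assoc _ (gramResolvent _ z),
      sq_smul_one_sub_mul_gramResolvent _ hz, Matrix.one_mul]
    simp only [Matrix.mul_assoc, add_assoc]
  calc R * Y - G
      = R * ((z ^ 2 • 1 - Y * Yᴴ) * (R * Y - G)) := by
        rw [← Matrix.mul_assoc, gramResolvent_mul_sq_smul_one_sub _ hz, Matrix.one_mul]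
    _ = R * (Y - (Y + Δ + Δ * (z ^ 2 • gramResolvent (Y + Δ)ᴴ z - 1) + Y * (Δᴴ * G))) := by
        rw [Matrix.mul_sub, ← Matrix.mul_assoc, sq_smul_one_sub_mul_gramResolvent _ hz,
          Matrix.one_mul, hG, conjTranspose_mul_gramResolvent_mul _ hz]
    _ = _ := by
        simp only [Matrix.mul_add, Matrix.mul_sub, Matrix.mul_smul, Matrix.mul_one,
          Matrix.mul_assoc]
        abel

theorem norm_trace_gramResolvent_mul_sub_gramResolvent_add_mul_le (Y Δ S : Matrix n m ℂ)
    (hz : z.im ≠ 0) :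
    ‖((gramResolvent Y z * Y - gramResolvent (Y + Δ) z * (Y + Δ)) * Sᴴ).trace‖
      ≤ (√(Fintype.card n) + √(Fintype.card m)) * ‖S‖ * |z.im|⁻¹ ^ 2
        * √(∑ i, ∑ j, ‖Δ i j‖ ^ 2) := by
  set R := gramResolvent Y z
  set G := gramResolvent (Y + Δ) z * (Y + Δ)
  have h1 : (z ^ 2 • (R * Δ * gramResolvent (Y + Δ)ᴴ z) * Sᴴ).trace
      = (Δ * (z • gramResolvent (Y + Δ)ᴴ z * Sᴴ * (z • R))).trace := by
    simp only [Matrix.smul_mul, Matrix.mul_smul, trace_smul, smul_smul, ← pow_two,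
      Matrix.mul_assoc]
    rw [trace_mul_comm R]
    simp only [Matrix.mul_assoc]
  have h2 : (R * Y * Δᴴ * G * Sᴴ).trace = (Δᴴ * (G * Sᴴ * (R * Y))).trace := by
    simp only [Matrix.mul_assoc]
    rw [trace_mul_comm R]
    simp only [Matrix.mul_assoc]
    rw [trace_mul_comm Y]
    simp only [Matrix.mul_assoc]
  have hb1 : ‖z • gramResolvent (Y + Δ)ᴴ z * Sᴴ * (z • R)‖ ≤ |z.im|⁻¹ * ‖S‖ * |z.im|⁻¹ := by
    refine (l2_opNorm_mul_mul_le _ _ _).trans ?_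
    rw [l2_opNorm_conjTranspose]
    gcongr <;> exact norm_smul_gramResolvent_le _ hz
  have hb2 : ‖G * Sᴴ * (R * Y)‖ ≤ |z.im|⁻¹ * ‖S‖ * |z.im|⁻¹ := by
    refine (l2_opNorm_mul_mul_le _ _ _).trans ?_
    rw [l2_opNorm_conjTranspose]
    gcongr <;> exact norm_gramResolvent_mul_le _ hz
  have t1 := norm_trace_mul_le Δ (z • gramResolvent (Y + Δ)ᴴ z * Sᴴ * (z • R))
  have t2 := norm_trace_mul_le Δᴴ (G * Sᴴ * (R * Y))
  rw [sum_sum_norm_conjTranspose_sq] at t2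
  rw [gramResolvent_mul_sub_gramResolvent_add_mul Y Δ hz, Matrix.sub_mul, Matrix.neg_mul,
    trace_sub, trace_neg, h1, h2]
  calc _ ≤ ‖(Δ * (z • gramResolvent (Y + Δ)ᴴ z * Sᴴ * (z • R))).trace‖
        + ‖(Δᴴ * (G * Sᴴ * (R * Y))).trace‖ := by rw [← norm_neg (trace _)]; exact norm_sub_le _ _
    _ ≤ √(Fintype.card n) * (|z.im|⁻¹ * ‖S‖ * |z.im|⁻¹) * √(∑ i, ∑ j, ‖Δ i j‖ ^ 2)
        + √(Fintype.card m) * (|z.im|⁻¹ * ‖S‖ * |z.im|⁻¹) * √(∑ i, ∑ j, ‖Δ i j‖ ^ 2) := by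
        gcongr
        · exact t1.trans (by gcongr)
        · exact t2.trans (by gcongr)
    _ = _ := by ring

end Matrix

section Complexification

variable {N M : ℕ}

lemma mc_add (A B : Matrix (Fin N) (Fin M) ℝ) : mc (A + B) = mc A + mc B := by
  ext; simp [mc]

lemma conjTranspose_mc (A : Matrix (Fin N) (Fin M) ℝ) : (mc A)ᴴ = (mc A)ᵀ := by
  ext; simp [mc]

lemma resL_eq_trace_gramResolvent (Y S : Matrix (Fin N) (Fin M) ℝ) (z : ℂ) :
    resL Y S z = (gramResolvent (mc Y) z * mc Y * (mc S)ᴴ).trace / N := by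
  rw [resL, gramResolvent, conjTranspose_mc, conjTranspose_mc]

lemma sqrt_sum_sum_norm_mc_sq (A : Matrix (Fin N) (Fin M) ℝ) :
    √(∑ i, ∑ j, ‖mc A i j‖ ^ 2) = frobNorm A := by
  simp [frobNorm, mc]

lemma mulVec_mc_apply (A : Matrix (Fin N) (Fin M) ℝ) (v : Fin M → ℂ) (i : Fin N) :
    (mc A *ᵥ v) i = ⟨(A *ᵥ fun j => (v j).re) i, (A *ᵥ fun j => (v j).im) i⟩ := by
  apply Complex.ext <;> simp [mc, mulVec, dotProduct, Complex.re_sum, Complex.im_sum]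

lemma OpNormLE.sum_sq_mulVec_le {A : Matrix (Fin N) (Fin M) ℝ} {K : ℝ} (hA : OpNormLE A K)
    (x : Fin M → ℝ) : ∑ i, (A *ᵥ x) i ^ 2 ≤ K ^ 2 * ∑ j, x j ^ 2 := by
  have h := pow_le_pow_left₀ (Real.sqrt_nonneg _) (hA x) 2
  rwa [mul_pow, Real.sq_sqrt (by positivity), Real.sq_sqrt (by positivity)] at h

lemma OpNormLE.l2_opNorm_mc_le {A : Matrix (Fin N) (Fin M) ℝ} {K : ℝ} (hA : OpNormLE A K)
    (hK : 0 ≤ K) : ‖mc A‖ ≤ K := by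
  refine ContinuousLinearMap.opNorm_le_bound _ hK fun v => ?_
  rw [← pow_le_pow_iff_left₀ (norm_nonneg _) (by positivity) two_ne_zero, mul_pow,
    EuclideanSpace.norm_sq_eq, EuclideanSpace.norm_sq_eq]
  have hre := hA.sum_sq_mulVec_le fun j => (v j).re
  have him := hA.sum_sq_mulVec_le fun j => (v j).im
  change ∑ i, ‖(mc A *ᵥ v) i‖ ^ 2 ≤ _
  simp only [mulVec_mc_apply, Complex.sq_norm, Complex.normSq_apply, ← sq,
    Finset.sum_add_distrib]
  linarith

theorem norm_resL_sub_resL_add_le {K : ℝ} (hK : 0 ≤ K) (Y δ S : Matrix (Fin N) (Fin M) ℝ)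
    (hS : OpNormLE S K) {z : ℂ} (hz : z.im ≠ 0) :
    ‖resL Y S z - resL (Y + δ) S z‖
      ≤ K * ((√N + √M) / N) * |z.im|⁻¹ ^ 2 * frobNorm δ := by
  have h := norm_trace_gramResolvent_mul_sub_gramResolvent_add_mul_le (mc Y) (mc δ) (mc S) hz
  rw [sqrt_sum_sum_norm_mc_sq, Fintype.card_fin, Fintype.card_fin] at h
  rw [resL_eq_trace_gramResolvent, resL_eq_trace_gramResolvent, mc_add, div_sub_div_same,
    ← trace_sub, ← Matrix.sub_mul, norm_div, Complex.norm_natCast]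
  calc _ ≤ (√N + √M) * K * |z.im|⁻¹ ^ 2 * frobNorm δ / N := by
        gcongr
        refine h.trans ?_
        gcongr
        · exact Real.sqrt_nonneg _
        · exact hS.l2_opNorm_mc_le hK
    _ = _ := by ring

end Complexification

/-- For `Y = √λ S + Z` and `Ỹ = √λ S + (Z + δ_Z)` with `N ≤ M`,
`‖S‖_op ≤ K`, `M/N ≤ K`, one has
`|L(z) − L̃(z)| ≤ C' N^{-1/2} |Im z|⁻² ‖δ_Z‖_F` with `C'` depending only on `K`. -/
theorem resL_lipschitz (K : ℝ) (hK : 0 < K) :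
    ∃ C' : ℝ, 0 < C' ∧
      ∀ (N M : ℕ), 0 < N → N ≤ M → (M : ℝ) ≤ K * N →
        ∀ (S Z δZ : Matrix (Fin N) (Fin M) ℝ), OpNormLE S K →
          ∀ lam : ℝ, 0 < lam →
            ∀ z : ℂ, z.im ≠ 0 →
              ‖resL (Real.sqrt lam • S + Z) S z
                  - resL (Real.sqrt lam • S + (Z + δZ)) S z‖
                ≤ C' * (1 / Real.sqrt N) * |z.im|⁻¹ ^ 2 * frobNorm δZ := by
  refine ⟨K * (1 + √K), by positivity, fun N M _ _ hMK S Z δZ hS lam _ z hz => ?_⟩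
  rw [← add_assoc]
  have hM : √M ≤ √K * √N := by rw [← Real.sqrt_mul hK.le]; exact Real.sqrt_le_sqrt hMK
  have hcoef : (√N + √M) / N ≤ (1 + √K) * (1 / √N) :=
    calc (√N + √M) / N ≤ (√N + √K * √N) / N := by gcongr
      _ = (1 + √K) * (√N / N) := by ring
      _ = (1 + √K) * (1 / √N) := by rw [Real.sqrt_div_self']
  have hF : 0 ≤ frobNorm δZ := Real.sqrt_nonneg _
  calc _ ≤ K * ((√N + √M) / N) * |z.im|⁻¹ ^ 2 * frobNorm δZ :=
        norm_resL_sub_resL_add_le hK.le _ δZ S hS hz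
    _ ≤ K * ((1 + √K) * (1 / √N)) * |z.im|⁻¹ ^ 2 * frobNorm δZ := by gcongr
    _ = _ := by ring
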